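/- (Lemma 4.2, values part, frieze form.) Let n ≥ 4, let (a(r,j)) be a frieze of type D_n whose ordinary rows are n-periodic (a(r,j+n) = a(r,j) for 1 ≤ r ≤ n−2 and all j) and such that a(n,2) = 1, and let F be a frieze of type A_{2n−1} containing the doubled quiddity row of (a(r,j)) at position p ∈ ℤ. Suppose moreover that F(p−1, p+n) = 1. Then the entries of the sectional path of F through vertex p−1 above this 1 are given by the two bottom rows of the type D frieze in alternation: for every j = 1,…,n−1, F(p−1, p+j) = a(n−1, j+2−n) if n−j is odd, and F(p−1, p+j) = a(n, j+2−n) if n−j is even. -/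
import Mathlib


/-- A frieze of type `A_m`: `F i j` is defined for `i ≤ j ≤ i + m + 3`. -/
def IsFriezeA (m : ℤ) (F : ℤ → ℤ → ℤ) : Prop :=
  (∀ i : ℤ, F i i = 0) ∧
  (∀ i : ℤ, F i (i + 1) = 1) ∧
  (∀ i : ℤ, F i (i + m + 2) = 1) ∧
  (∀ i : ℤ, F i (i + m + 3) = 0) ∧
  (∀ i j : ℤ, i + 2 ≤ j → j ≤ i + m + 1 → 0 < F i j) ∧
  (∀ i j : ℤ, i + 1 ≤ j → j ≤ i + m + 2 →
    F i j * F (i + 1) (j + 1) - F (i + 1) j * F i (j + 1) = 1)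

/-- A frieze of type `D_n`: positive integer rows `a r j` for `1 ≤ r ≤ n`,
with the convention `a 0 j = 1`, satisfying the type `D` frieze relations. -/
def IsFriezeD (n : ℤ) (a : ℤ → ℤ → ℤ) : Prop :=
  (∀ r j : ℤ, 1 ≤ r → r ≤ n → 0 < a r j) ∧
  (∀ j : ℤ, a 0 j = 1) ∧
  (∀ r j : ℤ, 1 ≤ r → r ≤ n - 3 →
    a r j * a r (j + 1) = 1 + a (r - 1) (j + 1) * a (r + 1) j) ∧
  (∀ j : ℤ, a (n - 1) j * a (n - 1) (j + 1) = 1 + a (n - 2) (j + 1)) ∧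
  (∀ j : ℤ, a n j * a n (j + 1) = 1 + a (n - 2) (j + 1)) ∧
  (∀ j : ℤ, a (n - 2) j * a (n - 2) (j + 1) =
    1 + a (n - 3) (j + 1) * a (n - 1) j * a n j)

/-- The representative of `j` modulo `n` lying in `{1, …, n}` (for `n > 0`). -/
def modRep (n j : ℤ) : ℤ := (j - 1) % n + 1

lemma modRep_eq (n j : ℤ) (h1 : 1 ≤ j) (h2 : j ≤ n) : modRep n j = j := by
  unfold modRep
  rw [Int.emod_eq_of_lt (by omega) (by omega)]
  omega


lemma fpos (m : ℤ) (F : ℤ → ℤ → ℤ) (hF : IsFriezeA m F) :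
    ∀ i j : ℤ, i + 1 ≤ j → j ≤ i + m + 2 → 0 < F i j := by
  intro i j hij hjm
  rcases eq_or_lt_of_le hij with h | h
  · rw [← h, hF.2.1 i]; exact one_pos
  · rcases eq_or_lt_of_le hjm with h' | h'
    · rw [h', hF.2.2.1 i]; exact one_pos
    · exact hF.2.2.2.2.1 i j (by omega) (by omega)

lemma frec (m : ℤ) (F : ℤ → ℤ → ℤ) (hF : IsFriezeA m F) :
    ∀ i j : ℤ, i + 1 ≤ j → j ≤ i + m + 2 →
      F i (j + 1) = F (j - 1) (j + 1) * F i j - F i (j - 1) := by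
  suffices H : ∀ k : ℕ, ∀ i j : ℤ, j = i + 1 + (k : ℤ) → j ≤ i + m + 2 →
      F i (j + 1) = F (j - 1) (j + 1) * F i j - F i (j - 1) by
    intro i j hij hjm
    refine H (j - (i + 1)).toNat i j ?_ hjm
    have := Int.toNat_of_nonneg (show (0:ℤ) ≤ j - (i+1) by omega)
    omega
  intro k
  induction k with
  | zero =>
    intro i j hj _
    have hji : j = i + 1 := by omega
    subst hji
    rw [show i + 1 - 1 = i by ring, hF.2.1 i, hF.1 i]
    ring
  | succ k ih =>
    intro i j hj hjm
    have hj2 : i + 2 ≤ j := by omega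
    have IH := ih (i + 1) j (by omega) (by omega)
    have D1 := hF.2.2.2.2.2 i j (by omega) (by omega)
    have D2 := hF.2.2.2.2.2 i (j - 1) (by omega) (by omega)
    rw [show j - 1 + 1 = j by ring] at D2
    have hp : 0 < F (i + 1) j := fpos m F hF (i + 1) j (by omega) (by omega)
    have key : (F i (j + 1) - (F (j - 1) (j + 1) * F i j - F i (j - 1))) * F (i + 1) j = 0 := by
      linear_combination F i j * IH - D1 + D2
    rcases mul_eq_zero.mp key with h | h
    · linarith
    · exact absurd h (ne_of_gt hp)

/-- The "R"-direction diagonal recursion in the top part of a `D` frieze. -/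
lemma drecR (n : ℤ) (hn : 4 ≤ n) (a : ℤ → ℤ → ℤ) (ha : IsFriezeD n a) :
    ∀ r : ℤ, 1 ≤ r → r ≤ n - 3 → ∀ j : ℤ,
      a (r + 1) j = a 1 (j + r) * a r j - a (r - 1) j := by
  have hpos := ha.1
  have ha0 := ha.2.1
  have hD3 := ha.2.2.1
  suffices H : ∀ k : ℕ, ∀ r : ℤ, r = 1 + (k : ℤ) → r ≤ n - 3 → ∀ j : ℤ,
      a (r + 1) j = a 1 (j + r) * a r j - a (r - 1) j by
    intro r hr1 hrn
    refine H (r - 1).toNat r ?_ hrn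
    have := Int.toNat_of_nonneg (show (0:ℤ) ≤ r - 1 by omega)
    omega
  intro k
  induction k with
  | zero =>
    intro r hr hrn j
    have hr1 : r = 1 := by omega
    subst hr1
    have h := hD3 1 j le_rfl (by omega)
    rw [show (1:ℤ) - 1 = 0 by ring, ha0 (j + 1)] at h
    rw [show (1:ℤ) + 1 = 2 by ring] at h ⊢
    rw [show (1:ℤ) - 1 = 0 by ring, ha0 j]
    linear_combination -h
  | succ k ih =>
    intro r' hr hrn j
    obtain ⟨r, rfl⟩ : ∃ r : ℤ, r' = r + 1 := ⟨r' - 1, by ring⟩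
    have hr1 : 1 ≤ r := by omega
    have ihj := ih r (by omega) (by omega) (j + 1)
    rw [show j + 1 + r = j + r + 1 by ring] at ihj
    have D3r := hD3 r j (by omega) (by omega)
    have D3r1 := hD3 (r + 1) j (by omega) (by omega)
    rw [show r + 1 - 1 = r by ring, show r + 1 + 1 = r + 2 by ring] at D3r1
    have hp : 0 < a r (j + 1) := hpos r (j + 1) (by omega) (by omega)
    rw [show r + 1 + 1 = r + 2 by ring, show r + 1 - 1 = r by ring,
      show j + (r + 1) = j + r + 1 by ring]
    have key : (a (r + 2) j - (a 1 (j + r + 1) * a (r + 1) j - a r j)) * a r (j + 1) = 0 := by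
      linear_combination a (r + 1) j * ihj + D3r - D3r1
    rcases mul_eq_zero.mp key with h | h
    · linarith
    · exact absurd h (ne_of_gt hp)

/-- The "L"-direction diagonal recursion in the top part of a `D` frieze. -/
lemma drecL (n : ℤ) (hn : 4 ≤ n) (a : ℤ → ℤ → ℤ) (ha : IsFriezeD n a) :
    ∀ r : ℤ, 1 ≤ r → r ≤ n - 3 → ∀ j : ℤ,
      a (r + 1) j = a 1 j * a r (j + 1) - a (r - 1) (j + 2) := by
  have hpos := ha.1
  have ha0 := ha.2.1
  have hD3 := ha.2.2.1
  suffices H : ∀ k : ℕ, ∀ r : ℤ, r = 1 + (k : ℤ) → r ≤ n - 3 → ∀ j : ℤ,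
      a (r + 1) j = a 1 j * a r (j + 1) - a (r - 1) (j + 2) by
    intro r hr1 hrn
    refine H (r - 1).toNat r ?_ hrn
    have := Int.toNat_of_nonneg (show (0:ℤ) ≤ r - 1 by omega)
    omega
  intro k
  induction k with
  | zero =>
    intro r hr hrn j
    have hr1 : r = 1 := by omega
    subst hr1
    have h := hD3 1 j le_rfl (by omega)
    rw [show (1:ℤ) - 1 = 0 by ring, ha0 (j + 1)] at h
    rw [show (1:ℤ) + 1 = 2 by ring] at h ⊢
    rw [show (1:ℤ) - 1 = 0 by ring, ha0 (j + 2)]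
    linear_combination -h
  | succ k ih =>
    intro r' hr hrn j
    obtain ⟨r, rfl⟩ : ∃ r : ℤ, r' = r + 1 := ⟨r' - 1, by ring⟩
    have hr1 : 1 ≤ r := by omega
    have ihj := ih r (by omega) (by omega) j
    have D3r := hD3 r (j + 1) (by omega) (by omega)
    rw [show j + 1 + 1 = j + 2 by ring] at D3r
    have D3r1 := hD3 (r + 1) j (by omega) (by omega)
    rw [show r + 1 - 1 = r by ring, show r + 1 + 1 = r + 2 by ring] at D3r1
    have hp : 0 < a r (j + 1) := hpos r (j + 1) (by omega) (by omega)
    rw [show r + 1 + 1 = r + 2 by ring, show r + 1 - 1 = r by ring]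
    have key : (a (r + 2) j - (a 1 j * a (r + 1) (j + 1) - a r (j + 2))) * a r (j + 1) = 0 := by
      linear_combination a (r + 1) (j + 1) * ihj + D3r - D3r1
    rcases mul_eq_zero.mp key with h | h
    · linarith
    · exact absurd h (ne_of_gt hp)

/-- Extension of the "R" recursion to the product of the two bottom rows. -/
lemma drecRP (n : ℤ) (hn : 4 ≤ n) (a : ℤ → ℤ → ℤ) (ha : IsFriezeD n a) :
    ∀ j : ℤ, a (n - 1) j * a n j = a 1 (j + n - 2) * a (n - 2) j - a (n - 3) j := by
  have hpos := ha.1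
  have hD3 := ha.2.2.1
  have hD6 := ha.2.2.2.2.2
  intro j
  have R := drecR n hn a ha (n - 3) (by omega) (by omega) (j + 1)
  rw [show n - 3 + 1 = n - 2 by ring, show n - 3 - 1 = n - 4 by ring,
    show j + 1 + (n - 3) = j + n - 2 by ring] at R
  have D3 := hD3 (n - 3) j (by omega) (by omega)
  rw [show n - 3 - 1 = n - 4 by ring, show n - 3 + 1 = n - 2 by ring] at D3
  have D6 := hD6 j
  have hp : 0 < a (n - 3) (j + 1) := hpos (n - 3) (j + 1) (by omega) (by omega)
  have key : (a (n - 1) j * a n j -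
      (a 1 (j + n - 2) * a (n - 2) j - a (n - 3) j)) * a (n - 3) (j + 1) = 0 := by
    linear_combination a (n - 2) j * R + D3 - D6
  rcases mul_eq_zero.mp key with h | h
  · linarith
  · exact absurd h (ne_of_gt hp)

/-- Extension of the "L" recursion to the product of the two bottom rows. -/
lemma drecLP (n : ℤ) (hn : 4 ≤ n) (a : ℤ → ℤ → ℤ) (ha : IsFriezeD n a) :
    ∀ j : ℤ, a (n - 1) j * a n j = a 1 j * a (n - 2) (j + 1) - a (n - 3) (j + 2) := by
  have hpos := ha.1
  have hD3 := ha.2.2.1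
  have hD6 := ha.2.2.2.2.2
  intro j
  have L := drecL n hn a ha (n - 3) (by omega) (by omega) j
  rw [show n - 3 + 1 = n - 2 by ring, show n - 3 - 1 = n - 4 by ring] at L
  have D3 := hD3 (n - 3) (j + 1) (by omega) (by omega)
  rw [show n - 3 - 1 = n - 4 by ring, show n - 3 + 1 = n - 2 by ring,
    show j + 1 + 1 = j + 2 by ring] at D3
  have D6 := hD6 j
  have hp : 0 < a (n - 3) (j + 1) := hpos (n - 3) (j + 1) (by omega) (by omega)
  have key : (a (n - 1) j * a n j -
      (a 1 j * a (n - 2) (j + 1) - a (n - 3) (j + 2))) * a (n - 3) (j + 1) = 0 := by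
    linear_combination a (n - 2) (j + 1) * L + D3 - D6
  rcases mul_eq_zero.mp key with h | h
  · linarith
  · exact absurd h (ne_of_gt hp)

/-- The key identity `a 1 j * (a (n-1) (j+1) * a n (j+1)) = 2 + a (n-2) (j+1) + a (n-2) (j+2)`. -/
lemma mstar (n : ℤ) (hn : 4 ≤ n) (a : ℤ → ℤ → ℤ) (ha : IsFriezeD n a)
    (hper : ∀ r j : ℤ, 1 ≤ r → r ≤ n - 2 → a r (j + n) = a r j) :
    ∀ j : ℤ, a 1 j * (a (n - 1) (j + 1) * a n (j + 1)) =
      2 + a (n - 2) (j + 1) + a (n - 2) (j + 2) := by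
  have hpos := ha.1
  have hD4 := ha.2.2.2.1
  have hD5 := ha.2.2.2.2.1
  have hD6 := ha.2.2.2.2.2
  intro j
  have e1 := drecLP n hn a ha j
  have e2 := drecRP n hn a ha (j + 2)
  rw [show j + 2 + n - 2 = j + n by ring, hper 1 j le_rfl (by omega)] at e2
  have e3 := hD6 (j + 1)
  rw [show j + 1 + 1 = j + 2 by ring] at e3
  have e4a := hD4 j
  have e4b := hD5 j
  have h4 : (a (n - 1) j * a (n - 1) (j + 1)) * (a n j * a n (j + 1)) =
      (1 + a (n - 2) (j + 1)) * (1 + a (n - 2) (j + 1)) := by rw [e4a, e4b]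
  have e5a := hD4 (j + 1)
  have e5b := hD5 (j + 1)
  rw [show j + 1 + 1 = j + 2 by ring] at e5a e5b
  have h5 : (a (n - 1) (j + 1) * a (n - 1) (j + 2)) * (a n (j + 1) * a n (j + 2)) =
      (1 + a (n - 2) (j + 2)) * (1 + a (n - 2) (j + 2)) := by rw [e5a, e5b]
  have hu : 0 < a (n - 2) (j + 1) := hpos _ _ (by omega) (by omega)
  have hv : 0 < a (n - 2) (j + 2) := hpos _ _ (by omega) (by omega)
  have key : (a 1 j * (a (n - 1) (j + 1) * a n (j + 1)) -
      (2 + a (n - 2) (j + 1) + a (n - 2) (j + 2))) *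
      (a (n - 2) (j + 1) + a (n - 2) (j + 2)) = 0 := by
    linear_combination (-(a (n - 1) (j + 1) * a n (j + 1))) * e1 -
      (a (n - 1) (j + 1) * a n (j + 1)) * e2 - 2 * e3 + h4 + h5
  rcases mul_eq_zero.mp key with h | h
  · linarith
  · exact absurd h (by positivity : (0:ℤ) < a (n - 2) (j + 1) + a (n - 2) (j + 2)).ne'

/-- Bottom-rows alternating recursion, first form. -/
lemma bottomI1 (n : ℤ) (hn : 4 ≤ n) (a : ℤ → ℤ → ℤ) (ha : IsFriezeD n a)
    (hper : ∀ r j : ℤ, 1 ≤ r → r ≤ n - 2 → a r (j + n) = a r j) :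
    ∀ s : ℤ, a 1 (s - 1) * a (n - 1) s = a n (s - 1) + a n (s + 1) := by
  have hpos := ha.1
  have hD5 := ha.2.2.2.2.1
  intro s
  have M := mstar n hn a ha hper (s - 1)
  rw [show s - 1 + 1 = s by ring, show s - 1 + 2 = s + 1 by ring] at M
  have D5a := hD5 (s - 1)
  rw [show s - 1 + 1 = s by ring] at D5a
  have D5b := hD5 s
  have hp : 0 < a n s := hpos n s (by omega) le_rfl
  have key : (a 1 (s - 1) * a (n - 1) s - (a n (s - 1) + a n (s + 1))) * a n s = 0 := by
    linear_combination M - D5a - D5b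
  rcases mul_eq_zero.mp key with h | h
  · linarith
  · exact absurd h (ne_of_gt hp)

/-- Bottom-rows alternating recursion, second form. -/
lemma bottomI2 (n : ℤ) (hn : 4 ≤ n) (a : ℤ → ℤ → ℤ) (ha : IsFriezeD n a)
    (hper : ∀ r j : ℤ, 1 ≤ r → r ≤ n - 2 → a r (j + n) = a r j) :
    ∀ s : ℤ, a 1 (s - 1) * a n s = a (n - 1) (s - 1) + a (n - 1) (s + 1) := by
  have hpos := ha.1
  have hD4 := ha.2.2.2.1
  intro s
  have M := mstar n hn a ha hper (s - 1)
  rw [show s - 1 + 1 = s by ring, show s - 1 + 2 = s + 1 by ring] at M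
  have D4a := hD4 (s - 1)
  rw [show s - 1 + 1 = s by ring] at D4a
  have D4b := hD4 s
  have hp : 0 < a (n - 1) s := hpos (n - 1) s (by omega) (by omega)
  have key : (a 1 (s - 1) * a n s - (a (n - 1) (s - 1) + a (n - 1) (s + 1))) * a (n - 1) s = 0 := by
    linear_combination M - D4a - D4b
  rcases mul_eq_zero.mp key with h | h
  · linarith
  · exact absurd h (ne_of_gt hp)

/-- Values of the diagonal of `F` starting at `p`, in terms of the `D`-frieze. -/
lemma diagVal (n : ℤ) (hn : 4 ≤ n) (a : ℤ → ℤ → ℤ) (ha : IsFriezeD n a)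
    (F : ℤ → ℤ → ℤ) (hF : IsFriezeA (2 * n - 1) F) (p : ℤ)
    (hq : ∀ k : ℤ, 1 ≤ k → k ≤ 2 * n - 1 →
      F (p + k - 1) (p + k + 1) = a 1 (modRep n (k + 1))) :
    (∀ k : ℤ, 1 ≤ k → k ≤ n - 1 → F p (p + k) = a (k - 1) 2) ∧
      F p (p + n) = a (n - 1) 2 * a n 2 := by
  have H : ∀ t : ℕ, (t : ℤ) + 3 ≤ n →
      F p (p + (t : ℤ) + 1) = a (t : ℤ) 2 ∧ F p (p + (t : ℤ) + 2) = a ((t : ℤ) + 1) 2 := by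
    intro t
    induction t with
    | zero =>
      intro _
      norm_num
      constructor
      · rw [show p + 1 = p + (0:ℤ) + 1 by ring] at *
        rw [show p + (0:ℤ) + 1 = p + 1 by ring, hF.2.1 p, ha.2.1 2]
      · have Q := hq 1 (by omega) (by omega)
        rw [show p + 1 - 1 = p by ring, show p + 1 + 1 = p + 2 by ring,
          show (1:ℤ) + 1 = 2 by norm_num, modRep_eq n 2 (by omega) (by omega)] at Q
        exact Q
    | succ t ih =>
      intro hg
      push_cast at hg ⊢
      obtain ⟨u1, u2⟩ := ih (by omega)
      constructor
      · rw [show p + ((t:ℤ) + 1) + 1 = p + (t:ℤ) + 2 by ring]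
        exact u2
      · rw [show p + ((t:ℤ) + 1) + 2 = p + (t:ℤ) + 3 by ring,
          show (t:ℤ) + 1 + 1 = (t:ℤ) + 2 by ring]
        have R := frec (2 * n - 1) F hF p (p + (t:ℤ) + 2) (by omega) (by omega)
        have Q := hq ((t:ℤ) + 2) (by omega) (by omega)
        rw [modRep_eq n ((t:ℤ) + 2 + 1) (by omega) (by omega)] at Q
        rw [show p + ((t:ℤ) + 2) - 1 = p + (t:ℤ) + 2 - 1 by ring,
          show p + ((t:ℤ) + 2) + 1 = p + (t:ℤ) + 2 + 1 by ring,
          show (t:ℤ) + 2 + 1 = (t:ℤ) + 3 by ring] at Q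
        rw [Q, u2] at R
        rw [show p + (t:ℤ) + 2 - 1 = p + (t:ℤ) + 1 by ring] at R
        rw [u1] at R
        rw [show p + (t:ℤ) + 2 + 1 = p + (t:ℤ) + 3 by ring] at R
        have Dr := drecR n hn a ha ((t:ℤ) + 1) (by omega) (by omega) 2
        rw [show (t:ℤ) + 1 + 1 = (t:ℤ) + 2 by ring, show 2 + ((t:ℤ) + 1) = (t:ℤ) + 3 by ring,
          show (t:ℤ) + 1 - 1 = (t:ℤ) by ring] at Dr
        rw [R, ← Dr]
  constructor
  · intro k hk1 hk2
    by_cases hk : k ≤ n - 2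
    · have ht : ((k - 1).toNat : ℤ) = k - 1 := Int.toNat_of_nonneg (by omega)
      have := (H (k - 1).toNat (by omega)).1
      rw [ht] at this
      rw [show p + (k - 1) + 1 = p + k by ring] at this
      exact this
    · have hk' : k = n - 1 := by omega
      subst hk'
      have ht : ((n - 3).toNat : ℤ) = n - 3 := Int.toNat_of_nonneg (by omega)
      have := (H (n - 3).toNat (by omega)).2
      rw [ht] at this
      rw [show p + (n - 3) + 2 = p + (n - 1) by ring, show (n:ℤ) - 3 + 1 = n - 1 - 1 by ring]
        at this
      exact this
  · have ht : ((n - 3).toNat : ℤ) = n - 3 := Int.toNat_of_nonneg (by omega)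
    obtain ⟨u1, u2⟩ := H (n - 3).toNat (by omega)
    rw [ht] at u1 u2
    rw [show p + (n - 3) + 1 = p + n - 2 by ring] at u1
    rw [show p + (n - 3) + 2 = p + n - 1 by ring, show (n:ℤ) - 3 + 1 = n - 2 by ring] at u2
    have R := frec (2 * n - 1) F hF p (p + n - 1) (by omega) (by omega)
    rw [show p + n - 1 + 1 = p + n by ring, show p + n - 1 - 1 = p + n - 2 by ring] at R
    have Q := hq (n - 1) (by omega) (by omega)
    rw [show p + (n - 1) - 1 = p + n - 1 - 1 by ring, show p + (n - 1) + 1 = p + n by ring,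
      show (n:ℤ) - 1 + 1 = n by ring, modRep_eq n n (by omega) le_rfl] at Q
    rw [show p + n - 1 - 1 = p + n - 2 by ring] at Q
    rw [Q, u1, u2] at R
    have RP := drecRP n hn a ha 2
    rw [show (2:ℤ) + n - 2 = n by ring] at RP
    rw [R, RP]

/-- The value just above the middle `1` on the sectional path. -/
lemma bprev (n : ℤ) (hn : 4 ≤ n) (a : ℤ → ℤ → ℤ) (ha : IsFriezeD n a)
    (hcut : a n 2 = 1)
    (F : ℤ → ℤ → ℤ) (hF : IsFriezeA (2 * n - 1) F) (p : ℤ)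
    (hq : ∀ k : ℤ, 1 ≤ k → k ≤ 2 * n - 1 →
      F (p + k - 1) (p + k + 1) = a 1 (modRep n (k + 1)))
    (h1 : F (p - 1) (p + n) = 1) :
    F (p - 1) (p + n - 1) = a (n - 1) 1 := by
  obtain ⟨dv1, dv2⟩ := diagVal n hn a ha F hF p hq
  have dmid := dv1 (n - 1) (by omega) le_rfl
  rw [show p + (n - 1) = p + n - 1 by ring, show (n:ℤ) - 1 - 1 = n - 2 by ring] at dmid
  have D := hF.2.2.2.2.2 (p - 1) (p + n - 1) (by omega) (by omega)
  rw [show p - 1 + 1 = p by ring, show p + n - 1 + 1 = p + n by ring] at D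
  rw [dv2, dmid, h1, hcut] at D
  have D4 := ha.2.2.2.1 1
  rw [show (1:ℤ) + 1 = 2 by norm_num] at D4
  have hp : 0 < a (n - 1) 2 := ha.1 (n - 1) 2 (by omega) (by omega)
  have key : (F (p - 1) (p + n - 1) - a (n - 1) 1) * a (n - 1) 2 = 0 := by
    linear_combination D - D4
  rcases mul_eq_zero.mp key with h | h
  · linarith
  · exact absurd h (ne_of_gt hp)


/-- Lemma 4.2, values part: the entries of the sectional path through the
entry `1 = F (p−1) (p+n)` are given by the two bottom rows of the type `D` frieze in
alternation. -/
theorem sectional_path_values (n : ℤ) (hn : 4 ≤ n) (a : ℤ → ℤ → ℤ)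
    (ha : IsFriezeD n a)
    (hper : ∀ r j : ℤ, 1 ≤ r → r ≤ n - 2 → a r (j + n) = a r j)
    (hcut : a n 2 = 1)
    (F : ℤ → ℤ → ℤ) (hF : IsFriezeA (2 * n - 1) F) (p : ℤ)
    (hq : ∀ k : ℤ, 1 ≤ k → k ≤ 2 * n - 1 →
      F (p + k - 1) (p + k + 1) = a 1 (modRep n (k + 1)))
    (h1 : F (p - 1) (p + n) = 1) :
    ∀ j : ℤ, 1 ≤ j → j ≤ n - 1 →
      (Odd (n - j) → F (p - 1) (p + j) = a (n - 1) (j + 2 - n)) ∧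
      (Even (n - j) → F (p - 1) (p + j) = a n (j + 2 - n)) := by
  have I1 := bottomI1 n hn a ha hper
  have I2 := bottomI2 n hn a ha hper
  have hb := bprev n hn a ha hcut F hF p hq h1
  have key : ∀ k : ℕ, ∀ j : ℤ, (k : ℤ) = n - 1 - j → 1 ≤ j →
      (F (p - 1) (p + j) = if Even (n - j) then a n (j + 2 - n) else a (n - 1) (j + 2 - n)) ∧
      (F (p - 1) (p + (j + 1)) =
        if Even (n - (j + 1)) then a n ((j + 1) + 2 - n) else a (n - 1) ((j + 1) + 2 - n)) := by
    intro k
    induction k with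
    | zero =>
      intro j hk hj
      have hk0 : (0 : ℤ) = n - 1 - j := by exact_mod_cast hk
      have hj' : j = n - 1 := by omega
      subst hj'
      constructor
      · rw [if_neg (fun h => by rw [Int.even_iff] at h; omega)]
        rw [show n - 1 + 2 - n = 1 by ring, show p + (n - 1) = p + n - 1 by ring]
        exact hb
      · rw [if_pos (Int.even_iff.mpr (by omega))]
        rw [show n - 1 + 1 + 2 - n = 2 by ring, show p + (n - 1 + 1) = p + n by ring, hcut]
        exact h1
    | succ k ih =>
      intro j hk hj
      have hk' : (k : ℤ) + 1 = n - 1 - j := by exact_mod_cast hk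
      have hjn : j ≤ n - 2 := by omega
      obtain ⟨A, B⟩ := ih (j + 1) (by omega) (by omega)
      have R := frec (2 * n - 1) F hF (p - 1) (p + (j + 1)) (by omega) (by omega)
      have Q := hq (j + 1) (by omega) (by omega)
      rw [modRep_eq n ((j + 1) + 1) (by omega) (by omega)] at Q
      rw [Q] at R
      rw [show p + (j + 1) - 1 = p + j by ring, show j + 1 + 1 = j + 2 by ring] at R
      rw [show p + (j + 1 + 1) = p + (j + 1) + 1 by ring] at B
      have hPer := hper 1 (j + 2 - n) le_rfl (by omega)
      rw [show j + 2 - n + n = j + 2 by ring] at hPer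
      refine ⟨?_, A⟩
      by_cases hp2 : Even (n - j)
      · have hE := Int.even_iff.mp hp2
        rw [if_pos hp2]
        rw [if_neg (fun h => by rw [Int.even_iff] at h; omega)] at A
        rw [if_pos (Int.even_iff.mpr (by omega))] at B
        rw [show j + 1 + 2 - n = j + 3 - n by ring] at A
        rw [show j + 1 + 1 + 2 - n = j + 4 - n by ring] at B
        rw [A, B] at R
        have I := I1 (j + 3 - n)
        rw [show j + 3 - n - 1 = j + 2 - n by ring, show j + 3 - n + 1 = j + 4 - n by ring] at I
        linear_combination R + a (n - 1) (j + 3 - n) * hPer + I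
      · have hE := Int.not_even_iff.mp hp2
        rw [if_neg hp2]
        rw [if_pos (Int.even_iff.mpr (by omega))] at A
        rw [if_neg (fun h => by rw [Int.even_iff] at h; omega)] at B
        rw [show j + 1 + 2 - n = j + 3 - n by ring] at A
        rw [show j + 1 + 1 + 2 - n = j + 4 - n by ring] at B
        rw [A, B] at R
        have I := I2 (j + 3 - n)
        rw [show j + 3 - n - 1 = j + 2 - n by ring, show j + 3 - n + 1 = j + 4 - n by ring] at I
        linear_combination R + a n (j + 3 - n) * hPer + I
  intro j hj1 hj2
  have comp := (key (n - 1 - j).toNat j (Int.toNat_of_nonneg (by omega)) hj1).1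
  constructor
  · intro hodd
    have c := comp
    rw [if_neg (fun h => (Int.not_odd_iff_even.mpr h) hodd)] at c
    exact c
  · intro heven
    have c := comp
    rw [if_pos heven] at c
    exact c
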